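/- arXiv:1709.09702 — 2 statements merged into one kernel-verified Lean document; each statement's English description precedes it below -/
import Mathlib

section
/- Let W_1, W_2, … be i.i.d. exponential random variables with rate 1, set Z_i = W_1 + ⋯ + W_i, and let K : ℝ≥0 → [0,1] be measurable, nonincreasing, and integrable with 0 < ∫_0^∞ K(u) du < ∞. Then the expected number of edges in the Poisson random connection model on n nodes grows linearly: lim_{n→∞} (1/n) Σ_{1≤i<j≤n} E[K(Z_j − Z_i)] = ∫_0^∞ K(u) du. In particular the graph sequence is n-sparse in expectation. -/
/-!
`Z j - Z i` is a sum of `j - i` independent rate-1 exponentials, so it is `Gamma(j - i, 1)`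
distributed and `E[K (Z j - Z i)] = g (j - i)` with `g m = ∫ K dGamma(m, 1)`. The densities
`x ^ m e^{-x} / m!` of `Gamma(m + 1, 1)` add up to `1` on `[0, ∞)` (Poisson weights), hence
`∑_{m ≥ 1} g m = ∫_0^∞ K`. The inner sum `∑_{i < j} g (j - i)` is the `j`-th partial sum of this
series, and the Cesàro means of a convergent sequence converge to its limit.
-/

open MeasureTheory ProbabilityTheory Filter Real Set
open scoped NNReal ENNReal

lemma gammaPDF_mul_exponentialPDF_neg_add {a r : ℝ} (ha : 0 < a) (hr : 0 < r) (u y : ℝ) :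
    gammaPDF a r y * exponentialPDF r (-y + u) = (Icc 0 u).indicator
      (fun y => ENNReal.ofReal (r ^ (a + 1) / Gamma a * exp (-(r * u)) * y ^ (a - 1))) y := by
  by_cases hy : y ∈ Icc 0 u
  · rw [indicator_of_mem hy, gammaPDF_of_nonneg hy.1,
      exponentialPDF_of_nonneg (by linarith [hy.2]),
      ← ENNReal.ofReal_mul (by have := hy.1; have := Gamma_pos_of_pos ha; positivity)]
    congr 1
    have : exp (-(r * y)) * exp (-(r * (-y + u))) = exp (-(r * u)) := by
      rw [← exp_add]; ring_nf
    rw [rpow_add hr, rpow_one]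
    linear_combination (r ^ a / Gamma a * y ^ (a - 1) * r) * this
  · rw [indicator_of_notMem hy]
    rcases lt_or_ge y 0 with hy0 | hy0
    · rw [gammaPDF_of_neg hy0, zero_mul]
    · have : u < y := by simpa [hy0] using hy
      rw [exponentialPDF_of_neg (by linarith), mul_zero]

lemma gammaPDF_lconvolution_exponentialPDF {a r : ℝ} (ha : 0 < a) (hr : 0 < r) :
    gammaPDF a r ⋆ₗ exponentialPDF r = gammaPDF (a + 1) r := by
  ext u
  rw [lconvolution_def, lintegral_congr (gammaPDF_mul_exponentialPDF_neg_add ha hr u)]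
  rcases lt_or_ge u 0 with hu | hu
  · rw [gammaPDF_of_neg hu, Icc_eq_empty (by linarith), indicator_empty, lintegral_zero]
  set C := r ^ (a + 1) / Gamma a * exp (-(r * u))
  have hint : IntegrableOn (fun y => C * y ^ (a - 1)) (Icc 0 u) := by
    rw [integrableOn_Icc_iff_integrableOn_Ioc, ← intervalIntegrable_iff_integrableOn_Ioc_of_le hu]
    exact (intervalIntegral.intervalIntegrable_rpow' (by linarith)).const_mul C
  have hnonneg : 0 ≤ᵐ[volume.restrict (Icc 0 u)] fun y => C * y ^ (a - 1) :=
    (ae_restrict_iff' measurableSet_Icc).mpr (ae_of_all _ fun y hy => by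
      have := hy.1; positivity)
  rw [lintegral_indicator measurableSet_Icc, ← ofReal_integral_eq_lintegral_ofReal hint hnonneg,
    integral_Icc_eq_integral_Ioc, ← intervalIntegral.integral_of_le hu,
    intervalIntegral.integral_const_mul, integral_rpow (Or.inl (by linarith)),
    gammaPDF_of_nonneg hu, sub_add_cancel, zero_rpow ha.ne', Gamma_add_one ha.ne',
    add_sub_cancel_right]
  congr 1
  simp only [C]
  have := Gamma_pos_of_pos ha
  field_simp
  ring

lemma gammaMeasure_conv_expMeasure {a r : ℝ} (ha : 0 < a) (hr : 0 < r) :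
    gammaMeasure a r ∗ expMeasure r = gammaMeasure (a + 1) r := by
  change volume.withDensity (gammaPDF a r) ∗ volume.withDensity (exponentialPDF r) = _
  rw [conv_withDensity_eq_lconvolution, gammaPDF_lconvolution_exponentialPDF ha hr, gammaMeasure]
  · exact (measurable_gammaPDFReal a r).ennreal_ofReal
  · exact (measurable_exponentialPDFReal r).ennreal_ofReal

lemma ProbabilityTheory.iIndepFun.map_sum_eq_gammaMeasure {Ω ι : Type*} [MeasurableSpace Ω]
    {μ : Measure Ω} [IsProbabilityMeasure μ] {W : ι → Ω → ℝ} {r : ℝ} (hr : 0 < r)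
    (hmeas : ∀ i, Measurable (W i)) (hindep : iIndepFun W μ)
    (hlaw : ∀ i, μ.map (W i) = expMeasure r) {s : Finset ι}
    (hs : s.Nonempty) : μ.map (∑ i ∈ s, W i) = gammaMeasure s.card r := by
  induction hs using Finset.Nonempty.cons_induction with
  | singleton i =>
    rw [Finset.sum_singleton, Finset.card_singleton, Nat.cast_one]
    exact hlaw i
  | cons i s hi hs ih =>
    rw [Finset.sum_cons, add_comm,
      (hindep.indepFun_finsetSum_of_notMem hmeas hi).map_add_eq_map_conv_map (by fun_prop)
        (hmeas i), ih, hlaw, gammaMeasure_conv_expMeasure (by simpa using hs) hr,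
      Finset.card_cons, Nat.cast_succ]

lemma hasSum_gammaPDFReal_nat_succ (r x : ℝ) :
    HasSum (fun m : ℕ => gammaPDFReal (m + 1) r x) ((Ici 0).indicator (fun _ => r) x) := by
  rcases lt_or_ge x 0 with hx | hx
  · simp [gammaPDFReal, hx.not_ge]
  have hterm (m : ℕ) :
      gammaPDFReal (m + 1) r x = r * exp (-(r * x)) * ((r * x) ^ m / m.factorial) := by
    rw [gammaPDFReal, if_pos hx, add_sub_cancel_right, rpow_natCast, Gamma_nat_eq_factorial,
      ← Nat.cast_succ, rpow_natCast, pow_succ, mul_pow]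
    ring
  have h := (NormedSpace.expSeries_div_hasSum_exp (r * x)).mul_left (r * exp (-(r * x)))
  rw [← exp_eq_exp_ℝ, mul_assoc, ← exp_add, neg_add_cancel, exp_zero, mul_one] at h
  rw [funext hterm, indicator_of_mem (mem_Ici.mpr hx)]
  exact h

lemma integral_gammaMeasure_eq_integral_gammaPDFReal_mul {a r : ℝ} (ha : 0 < a) (hr : 0 < r)
    (f : ℝ → ℝ) : ∫ x, f x ∂gammaMeasure a r = ∫ x, gammaPDFReal a r x * f x := by
  rw [gammaMeasure, integral_withDensity_eq_integral_toReal_smul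
    (show Measurable (gammaPDF a r) from (measurable_gammaPDFReal a r).ennreal_ofReal)
    (ae_of_all _ fun _ => ENNReal.ofReal_lt_top)]
  simp only [gammaPDF, ENNReal.toReal_ofReal (gammaPDFReal_nonneg ha hr _), smul_eq_mul]

lemma hasSum_integral_gammaMeasure_nat_succ {K : ℝ → ℝ} (hKmeas : Measurable K)
    (hKint : IntegrableOn K (Ioi 0)) {r : ℝ} (hr : 0 < r) :
    HasSum (fun m : ℕ => ∫ x, K x ∂gammaMeasure (m + 1) r) (r * ∫ x in Ioi 0, K x) := by
  have hpdf (m : ℕ) (x : ℝ) : 0 ≤ gammaPDFReal (m + 1) r x :=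
    gammaPDFReal_nonneg (Nat.cast_add_one_pos m) hr x
  have hsum (g : ℝ → ℝ) (x : ℝ) : HasSum (fun m : ℕ => gammaPDFReal (m + 1) r x * g x)
      ((Ici 0).indicator (fun x => r * g x) x) := by
    rw [indicator_mul_left]
    exact (hasSum_gammaPDFReal_nat_succ r x).mul_right (g x)
  have hdens (m : ℕ) : ∫ x, K x ∂gammaMeasure (m + 1) r = ∫ x, gammaPDFReal (m + 1) r x * K x :=
    integral_gammaMeasure_eq_integral_gammaPDFReal_mul (Nat.cast_add_one_pos m) hr K
  have hlim : ∫ x in Ioi 0, r * K x = ∫ x, (Ici 0).indicator (fun x => r * K x) x := by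
    rw [← integral_Ici_eq_integral_Ioi, integral_indicator measurableSet_Ici]
  have hbound : Integrable (fun x => ∑' m : ℕ, gammaPDFReal (m + 1) r x * ‖K x‖) := by
    simp only [fun x => (hsum (‖K ·‖) x).tsum_eq]
    rw [integrable_indicator_iff measurableSet_Ici]
    exact ((integrableOn_Ici_iff_integrableOn_Ioi (f := K)).mpr hKint).norm.const_mul r
  simp only [hdens]
  rw [← integral_const_mul, hlim]
  refine hasSum_integral_of_dominated_convergence (fun m x => gammaPDFReal (m + 1) r x * ‖K x‖)
    (fun m => ?_) (fun m => ?_) ?_ hbound ?_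
  · exact ((measurable_gammaPDFReal _ r).mul hKmeas).aestronglyMeasurable
  · exact ae_of_all _ fun x => le_of_eq (by rw [norm_mul, Real.norm_of_nonneg (hpdf m x)])
  · exact ae_of_all _ fun x => (hsum (‖K ·‖) x).summable
  · exact ae_of_all _ (hsum K)

lemma HasSum.tendsto_cesaro_sum_range_sub {g : ℕ → ℝ} {L : ℝ}
    (h : HasSum (fun m => g (m + 1)) L) :
    Tendsto (fun n : ℕ => (1 / (n : ℝ)) * ∑ j ∈ Finset.range n, ∑ i ∈ Finset.range j, g (j - i))
      atTop (nhds L) := by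
  have hinner (j : ℕ) : ∑ i ∈ Finset.range j, g (j - i) = ∑ m ∈ Finset.range j, g (m + 1) := by
    rw [← Finset.sum_range_reflect]
    exact Finset.sum_congr rfl fun i hi => by rw [Finset.mem_range] at hi; congr 1; omega
  simpa only [one_div, hinner] using h.tendsto_sum_nat.cesaro

theorem poisson_rcm_n_sparse_general
    {Ω : Type*} [MeasureSpace Ω] [IsProbabilityMeasure (ℙ : Measure Ω)]
    (W : ℕ → Ω → ℝ) (hWmeas : ∀ i, Measurable (W i))
    (hWindep : iIndepFun W ℙ)
    (hWlaw : ∀ i, Measure.map (W i) ℙ = expMeasure 1)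
    (Z : ℕ → Ω → ℝ) (hZ : ∀ i ω, Z i ω = ∑ k ∈ Finset.range (i + 1), W k ω)
    (K : ℝ → ℝ) (hKmeas : Measurable K)
    (hKint : IntegrableOn K (Set.Ioi (0 : ℝ))) :
    Tendsto
      (fun n : ℕ =>
        (1 / (n : ℝ)) * ∑ j ∈ Finset.range n, ∑ i ∈ Finset.range j, ∫ ω, K (Z j ω - Z i ω))
      atTop (nhds (∫ u in Set.Ioi (0 : ℝ), K u)) := by
  have hincrement {i j : ℕ} (hij : i < j) :
      (fun ω => Z j ω - Z i ω) = ∑ k ∈ Finset.Ico (i + 1) (j + 1), W k := by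
    funext ω
    rw [Finset.sum_apply, hZ, hZ, Finset.sum_Ico_eq_sub _ (by omega)]
  have hexpect {i j : ℕ} (hij : i < j) :
      ∫ ω, K (Z j ω - Z i ω) = ∫ x, K x ∂gammaMeasure ((j - i : ℕ) : ℝ) 1 := by
    rw [← integral_map (by rw [hincrement hij]; fun_prop) hKmeas.aestronglyMeasurable,
      hincrement hij, hWindep.map_sum_eq_gammaMeasure one_pos hWmeas hWlaw
        (Finset.nonempty_Ico.mpr (by omega)), Nat.card_Ico, Nat.add_sub_add_right]
  have hseries := hasSum_integral_gammaMeasure_nat_succ hKmeas hKint one_pos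
  rw [one_mul] at hseries
  refine (HasSum.tendsto_cesaro_sum_range_sub (g := fun m : ℕ => ∫ x, K x ∂gammaMeasure m 1)
    (by simpa only [Nat.cast_succ] using hseries)).congr fun n => ?_
  congr 1
  exact Finset.sum_congr rfl fun j _ =>
    Finset.sum_congr rfl fun i hi => (hexpect (Finset.mem_range.mp hi)).symm

/-- **The Poisson random connection model on ℝ₊ is `n`-sparse in expectation.**
With `Z i = W 0 + ⋯ + W i` the partial sums of i.i.d. rate-1 exponentials and a
nonincreasing integrable link probability function `K` on `[0,∞)` with
`0 < ∫_0^∞ K < ∞`, the expected number of edges among the first `n` nodes,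
`∑_{i<j<n} E[K (Z j − Z i)]`, satisfies
`(1/n) ∑_{i<j<n} E[K (Z j − Z i)] → ∫_0^∞ K(u) du`. -/
theorem poisson_rcm_n_sparse
    {Ω : Type*} [MeasureSpace Ω] [IsProbabilityMeasure (ℙ : Measure Ω)]
    (W : ℕ → Ω → ℝ) (hWmeas : ∀ i, Measurable (W i))
    (hWindep : iIndepFun W ℙ)
    (hWlaw : ∀ i, Measure.map (W i) ℙ = expMeasure 1)
    (Z : ℕ → Ω → ℝ) (hZ : ∀ i ω, Z i ω = ∑ k ∈ Finset.range (i + 1), W k ω)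
    (K : ℝ → ℝ) (hKmeas : Measurable K)
    (hK0 : ∀ t, 0 ≤ t → 0 ≤ K t) (hK1 : ∀ t, 0 ≤ t → K t ≤ 1)
    (hKanti : AntitoneOn K (Set.Ici (0 : ℝ)))
    (hKint : IntegrableOn K (Set.Ioi (0 : ℝ)))
    (hKpos : 0 < ∫ u in Set.Ioi (0 : ℝ), K u) :
    Tendsto
      (fun n : ℕ =>
        (1 / (n : ℝ)) * ∑ j ∈ Finset.range n, ∑ i ∈ Finset.range j, ∫ ω, K (Z j ω - Z i ω))
      atTop (nhds (∫ u in Set.Ioi (0 : ℝ), K u)) :=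
  poisson_rcm_n_sparse_general W hWmeas hWindep hWlaw Z hZ K hKmeas hKint
end

section
/- Let (S,ρ) be a metric space, μ a probability measure on S, K : ℝ≥0 → [0,1] measurable with ∫∫ K(ρ(z,z′)) dμ(z)dμ(z′) > 0, and let (s_n) be a sequence of positive reals with s_n·K(ρ(z,z′)) ≤ 1 for all z,z′ and all n. For each n define ℙⁿ on symmetric {0,1}-valued n×n matrices with zero diagonal by ℙⁿ({y}) = ∫_{Sⁿ} ∏_{1≤i<j≤n} (s_n K(ρ(z_i,z_j)))^{y_{ij}} (1−s_n K(ρ(z_i,z_j)))^{1−y_{ij}} dμ^{⊗n}(z). If s_{n₁} ≠ s_{n₂} for some n₂ > n₁ ≥ 2, then the family (ℙⁿ) is not projective: there exist n₁ < n₂ and a symmetric y ∈ {0,1}^{n₁×n₁} with zero diagonal such that ℙ^{n₁}({y}) ≠ Σ_x ℙ^{n₂}({x}), the sum ranging over all symmetric x ∈ {0,1}^{n₂×n₂} with zero diagonal satisfying x_{ij} = y_{ij} for 1 ≤ i,j ≤ n₁. -/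
open MeasureTheory
open scoped NNReal ENNReal

open Finset ProbabilityTheory

/-!
Summing the likelihood over all graphs that contain a fixed edge `{i, j}` leaves the single
factor `s_n K(ρ(z_i, z_j))`, and `(z_i, z_j)` has law `μ ⊗ μ`; so the edge has probability
`s_n ∫∫ K dμ dμ` under `ℙⁿ`. Projectivity would give the edge `{1, 2}` the same probability
under `ℙ^{n₁}` and `ℙ^{n₂}`, forcing `s_{n₁} = s_{n₂}`.

If `K ∘ ρ` is not `μ ⊗ μ`-integrable (no measurability of `K` or `ρ` on `S × S` is assumed),
the Bochner integrals defining `ℙ²` are all `0` while `ℙ¹ = 1`, which breaks projectivity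
as well.
-/

section AdjacencyMatrix

variable {ι R : Type*} [Fintype ι] [CommSemiring R]

theorem sum_prod_filter_apply_eq_true [DecidableEq ι] (f : ι → Bool → R)
    (hf : ∀ i, f i true + f i false = 1) (i₀ : ι) :
    ∑ g ∈ univ.filter (fun g : ι → Bool => g i₀ = true), ∏ i, f i (g i) = f i₀ true := by
  have hfilter : univ.filter (fun g : ι → Bool => g i₀ = true)
      = Fintype.piFinset (Function.update (fun _ => (univ : Finset Bool)) i₀ {true}) := by
    ext g
    simp only [mem_filter, mem_univ, true_and, Fintype.mem_piFinset]
    constructor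
    · intro hg i
      rcases eq_or_ne i i₀ with rfl | hi <;> simp [*]
    · intro hg
      simpa using hg i₀
  rw [hfilter, ← prod_univ_sum, Fintype.prod_eq_single i₀ fun i hi => by simp [hi, hf]]
  simp

variable [LinearOrder ι] [LocallyFiniteOrderTop ι]

theorem prod_Ioi_eq_prod_subtype_lt (g : ι → ι → R) :
    ∏ i, ∏ j ∈ Ioi i, g i j = ∏ p : {p : ι × ι // p.1 < p.2}, g p.1.1 p.1.2 := by
  rw [← prod_subtype (univ.filter fun p : ι × ι => p.1 < p.2) (by simp) fun p => g p.1 p.2,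
    prod_filter, Fintype.prod_prod_type]
  refine prod_congr rfl fun i _ => ?_
  rw [← prod_filter]
  congr 1
  ext j
  simp

theorem sum_adjMatrix_edge_prod (f : ι → ι → Bool → R)
    (hf : ∀ i j, i < j → f i j true + f i j false = 1) {i₀ j₀ : ι} (h : i₀ < j₀) :
    ∑ x ∈ univ.filter (fun x : ι → ι → Bool =>
        (∀ i j, x i j = x j i) ∧ (∀ i, x i i = false) ∧ x i₀ j₀ = true),
      ∏ i, ∏ j ∈ Ioi i, f i j (x i j) = f i₀ j₀ true := by
  simp_rw [prod_Ioi_eq_prod_subtype_lt]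
  rw [← sum_prod_filter_apply_eq_true (fun p : {p : ι × ι // p.1 < p.2} => f p.1.1 p.1.2)
    (fun p => hf _ _ p.2) ⟨(i₀, j₀), h⟩]
  refine sum_nbij' (fun x p => x p.1.1 p.1.2)
    (fun g i j => if h : i < j then g ⟨(i, j), h⟩ else if h : j < i then g ⟨(j, i), h⟩ else false)
    ?_ ?_ ?_ ?_ fun _ _ => rfl
  · intro x hx
    simp only [mem_filter, mem_univ, true_and] at hx ⊢
    exact hx.2.2
  · intro g hg
    simp only [mem_filter, mem_univ, true_and] at hg ⊢
    refine ⟨fun i j => ?_, fun i => by simp, by simpa [h] using hg⟩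
    rcases lt_trichotomy i j with hij | rfl | hij
    · simp [hij, hij.not_gt]
    · rfl
    · simp [hij, hij.not_gt]
  · intro x hx
    simp only [mem_filter, mem_univ, true_and] at hx
    funext i j
    rcases lt_trichotomy i j with hij | rfl | hij
    · simp [hij]
    · simp [hx.2.1]
    · simp [hij, hij.not_gt, hx.1 i j]
  · intro g _
    funext p
    simp [p.2]

end AdjacencyMatrix

section ProductMeasure

variable {ι S : Type*} [Fintype ι] [MeasurableSpace S] (μ : Measure S) [IsProbabilityMeasure μ]

theorem measurePreserving_pi_pair {i j : ι} (hij : i ≠ j) :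
    MeasurePreserving (fun z : ι → S => (z i, z j)) (Measure.pi fun _ => μ) (μ.prod μ) := by
  refine ⟨by fun_prop, ?_⟩
  have hindep := (iIndepFun_pi (μ := fun _ : ι => μ) (X := fun _ x => x)
    fun _ => aemeasurable_id).indepFun hij
  rw [hindep.map_prod_eq_prod_map_map (measurable_pi_apply i).aemeasurable
    (measurable_pi_apply j).aemeasurable, (measurePreserving_eval _ i).map_eq,
    (measurePreserving_eval _ j).map_eq]

end ProductMeasure

section LatentPosition

variable {ι S : Type*} [Fintype ι] [LinearOrder ι] [LocallyFiniteOrderTop ι]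

def latentLikelihood (w : S → S → ℝ) (x : ι → ι → Bool) (z : ι → S) : ℝ :=
  ∏ i, ∏ j ∈ Ioi i, if x i j then w (z i) (z j) else 1 - w (z i) (z j)

theorem abs_latentLikelihood_le_one {w : S → S → ℝ} (hw : ∀ a b, w a b ∈ Set.Icc 0 1)
    (x : ι → ι → Bool) (z : ι → S) : |latentLikelihood w x z| ≤ 1 := by
  rw [latentLikelihood, abs_prod]
  refine prod_le_one (fun _ _ => abs_nonneg _) fun i _ => ?_
  rw [abs_prod]
  refine prod_le_one (fun _ _ => abs_nonneg _) fun j _ => ?_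
  obtain ⟨h0, h1⟩ := hw (z i) (z j)
  cases x i j <;> simp only [Bool.false_eq_true, if_true, if_false, abs_le] <;>
    constructor <;> linarith

theorem sum_latentLikelihood_edge (w : S → S → ℝ) (z : ι → S) {i₀ j₀ : ι} (h : i₀ < j₀) :
    ∑ x ∈ univ.filter (fun x : ι → ι → Bool =>
        (∀ i j, x i j = x j i) ∧ (∀ i, x i i = false) ∧ x i₀ j₀ = true),
      latentLikelihood w x z = w (z i₀) (z j₀) :=
  sum_adjMatrix_edge_prod (fun i j b => if b then w (z i) (z j) else 1 - w (z i) (z j))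
    (fun _ _ _ => add_sub_cancel _ _) h

theorem latentLikelihood_of_subsingleton [Subsingleton ι] (w : S → S → ℝ) (x : ι → ι → Bool)
    (z : ι → S) : latentLikelihood w x z = 1 :=
  prod_eq_one fun i _ => prod_eq_one fun j hj =>
    ((mem_Ioi.mp hj).ne (Subsingleton.elim i j)).elim

variable [MeasurableSpace S] {μ : Measure S} [IsProbabilityMeasure μ]

theorem integrable_latentLikelihood {w : S → S → ℝ} (hw : ∀ a b, w a b ∈ Set.Icc 0 1)
    (hwm : AEStronglyMeasurable (Function.uncurry w) (μ.prod μ)) (x : ι → ι → Bool) :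
    Integrable (latentLikelihood w x) (Measure.pi fun _ => μ) := by
  refine Integrable.of_bound ?_ 1 (.of_forall fun z => abs_latentLikelihood_le_one hw x z)
  refine Finset.aestronglyMeasurable_fun_prod _ fun i _ =>
    Finset.aestronglyMeasurable_fun_prod _ fun j hj => ?_
  have hpair := hwm.comp_measurePreserving (measurePreserving_pi_pair μ (mem_Ioi.mp hj).ne)
  cases x i j
  · exact aestronglyMeasurable_const.sub hpair
  · exact hpair

theorem sum_integral_latentLikelihood_edge {w : S → S → ℝ} (hw : ∀ a b, w a b ∈ Set.Icc 0 1)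
    (hwm : AEStronglyMeasurable (Function.uncurry w) (μ.prod μ)) {i₀ j₀ : ι} (h : i₀ < j₀) :
    ∑ x ∈ univ.filter (fun x : ι → ι → Bool =>
        (∀ i j, x i j = x j i) ∧ (∀ i, x i i = false) ∧ x i₀ j₀ = true),
      ∫ z, latentLikelihood w x z ∂(Measure.pi fun _ => μ) = ∫ p, w p.1 p.2 ∂(μ.prod μ) := by
  have hpair := measurePreserving_pi_pair μ h.ne
  rw [← integral_finsetSum _ fun x _ => integrable_latentLikelihood hw hwm x]
  simp_rw [sum_latentLikelihood_edge w _ h]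
  rw [← hpair.map_eq, integral_map hpair.measurable.aemeasurable (by rwa [hpair.map_eq])]

theorem integral_latentLikelihood_fin_two (w : S → S → ℝ) (x : Fin 2 → Fin 2 → Bool) :
    ∫ z, latentLikelihood w x z ∂(Measure.pi fun _ => μ)
      = ∫ p, (if x 0 1 then w p.1 p.2 else 1 - w p.1 p.2) ∂(μ.prod μ) := by
  rw [← (measurePreserving_piFinTwo fun _ => μ).integral_comp']
  have hIoi0 : Ioi (0 : Fin 2) = {1} := by decide
  have hIoi1 : Ioi (1 : Fin 2) = ∅ := by decide
  simp [latentLikelihood, Fin.prod_univ_two, hIoi0, hIoi1]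

theorem integral_latentLikelihood_fin_two_of_not_integrable {w : S → S → ℝ}
    (hw : ¬ Integrable (Function.uncurry w) (μ.prod μ)) (x : Fin 2 → Fin 2 → Bool) :
    ∫ z, latentLikelihood w x z ∂(Measure.pi fun _ => μ) = 0 := by
  rw [integral_latentLikelihood_fin_two]
  refine integral_undef fun hx => hw ?_
  cases hx01 : x 0 1 <;> simp only [hx01, Bool.false_eq_true, if_true, if_false] at hx
  · exact ((integrable_const 1).sub hx).congr (.of_forall fun p => by simp [Function.uncurry])
  · exact hx

end LatentPosition

theorem sum_filter_edge_eq_of_projective {ι κ M : Type*} [Fintype ι] [DecidableEq ι]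
    [Fintype κ] [DecidableEq κ] [AddCommMonoid M] (e : ι → κ)
    (P₁ : (ι → ι → Bool) → M) (P₂ : (κ → κ → Bool) → M)
    (hP : ∀ y : ι → ι → Bool, (∀ i j, y i j = y j i) → (∀ i, y i i = false) →
      P₁ y = ∑ x ∈ univ.filter (fun x : κ → κ → Bool => (∀ i j, x i j = x j i) ∧
        (∀ i, x i i = false) ∧ ∀ i j, x (e i) (e j) = y i j), P₂ x)
    (i₀ j₀ : ι) :
    ∑ y ∈ univ.filter (fun y : ι → ι → Bool =>
        (∀ i j, y i j = y j i) ∧ (∀ i, y i i = false) ∧ y i₀ j₀ = true), P₁ y =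
      ∑ x ∈ univ.filter (fun x : κ → κ → Bool =>
        (∀ i j, x i j = x j i) ∧ (∀ i, x i i = false) ∧ x (e i₀) (e j₀) = true), P₂ x := by
  set restrict : (κ → κ → Bool) → ι → ι → Bool := fun x i j => x (e i) (e j)
  rw [← sum_fiberwise_of_maps_to (g := restrict) fun x hx => ?_]
  · refine sum_congr rfl fun y hy => ?_
    simp only [mem_filter, mem_univ, true_and] at hy
    rw [hP y hy.1 hy.2.1]
    refine sum_congr ?_ fun _ _ => rfl
    ext x
    simp only [mem_filter, mem_univ, true_and, restrict, funext_iff]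
    constructor
    · rintro ⟨hsymm, hdiag, hxy⟩
      exact ⟨⟨hsymm, hdiag, (hxy i₀ j₀).trans hy.2.2⟩, hxy⟩
    · rintro ⟨⟨hsymm, hdiag, -⟩, hxy⟩
      exact ⟨hsymm, hdiag, hxy⟩
  · simp only [mem_filter, mem_univ, true_and, restrict] at hx ⊢
    exact ⟨fun i j => hx.1 _ _, fun i => hx.2.1 _, hx.2.2⟩

theorem sparse_graphon_lpm_not_projective_general
    {S : Type*} [MetricSpace S] [MeasurableSpace S]
    (μ : Measure S) [IsProbabilityMeasure μ]
    (K : ℝ≥0 → ℝ) (hK0 : ∀ t, 0 ≤ K t)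
    (hKpos : 0 < ∫ z, ∫ z', K (nndist z z') ∂μ ∂μ)
    (s : ℕ → ℝ) (hspos : ∀ n, 0 < s n)
    (hsK : ∀ (n : ℕ) (z z' : S), s n * K (nndist z z') ≤ 1)
    (P : (n : ℕ) → (Fin n → Fin n → Bool) → ℝ)
    (hP : ∀ (n : ℕ) (y : Fin n → Fin n → Bool),
      P n y = ∫ z : Fin n → S,
        ∏ i : Fin n, ∏ j ∈ Finset.Ioi i,
          (if y i j then s n * K (nndist (z i) (z j))
           else 1 - s n * K (nndist (z i) (z j)))
        ∂(Measure.pi fun _ : Fin n => μ))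
    (hnonconst : ∃ n₁ n₂ : ℕ, 2 ≤ n₁ ∧ n₁ < n₂ ∧ s n₁ ≠ s n₂) :
    ∃ (n₁ n₂ : ℕ) (hn : n₁ < n₂) (y : Fin n₁ → Fin n₁ → Bool),
      (∀ i j, y i j = y j i) ∧ (∀ i, y i i = false) ∧
      P n₁ y ≠
        ∑ x ∈ Finset.univ.filter (fun x : Fin n₂ → Fin n₂ → Bool =>
            (∀ i j, x i j = x j i) ∧ (∀ i, x i i = false) ∧
            (∀ i j : Fin n₁, x (Fin.castLE hn.le i) (Fin.castLE hn.le j) = y i j)),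
          P n₂ x := by
  obtain ⟨n₁, n₂, hn₁, hlt, hsne⟩ := hnonconst
  have hP' (n : ℕ) (y : Fin n → Fin n → Bool) : P n y =
      ∫ z, latentLikelihood (fun a b => s n * K (nndist a b)) y z ∂(Measure.pi fun _ => μ) :=
    hP n y
  by_cases hKint : Integrable (fun p : S × S => K (nndist p.1 p.2)) (μ.prod μ)
  · have hedge (n : ℕ) {i j : Fin n} (hij : i < j) :
        ∑ x ∈ univ.filter (fun x : Fin n → Fin n → Bool =>
          (∀ i j, x i j = x j i) ∧ (∀ i, x i i = false) ∧ x i j = true), P n x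
          = s n * ∫ z, ∫ z', K (nndist z z') ∂μ ∂μ := by
      simp_rw [hP']
      rw [← integral_prod _ hKint, ← integral_const_mul]
      -- Here and below, `convert` identifies the statement's `Nat.decidableForallFin` instances
      -- with the generic `Fintype.decidableForallFintype` ones of the lemmas.
      convert sum_integral_latentLikelihood_edge
        (fun a b => ⟨mul_nonneg (hspos n).le (hK0 _), hsK n a b⟩) (hKint.1.const_mul (s n)) hij
    by_contra hproj
    push Not at hproj
    have h01 : (⟨0, by omega⟩ : Fin n₁) < ⟨1, by omega⟩ := Fin.mk_lt_mk.mpr one_pos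
    refine hsne (mul_right_cancel₀ hKpos.ne' ?_)
    rw [← hedge n₁ h01, ← hedge n₂ ((Fin.castLE_lt_castLE_iff hlt.le).mpr h01)]
    convert sum_filter_edge_eq_of_projective (Fin.castLE hlt.le) (P n₁) (P n₂)
      (fun y hsymm hdiag => by convert hproj n₁ n₂ hlt y hsymm hdiag) _ _
  · have hwint : ¬ Integrable (Function.uncurry fun a b => s 2 * K (nndist a b)) (μ.prod μ) :=
      fun h => hKint ((integrable_const_mul_iff (hspos 2).ne'.isUnit _).mp h)
    refine ⟨1, 2, one_lt_two, fun _ _ => false, fun _ _ => rfl, fun _ => rfl, ?_⟩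
    rw [hP', sum_eq_zero fun x _ =>
      (hP' 2 x).trans (integral_latentLikelihood_fin_two_of_not_integrable hwint x)]
    simp [latentLikelihood_of_subsingleton]

/-- **Sparse graphon-based latent position models are not projective.**
With i.i.d. latent positions from `μ` and link probability `s_n · K(ρ(z_i,z_j))` for
a graph on `n` nodes, if the sparsity sequence is not constant (there are
`n₂ > n₁ ≥ 2` with `s_{n₁} ≠ s_{n₂}`) and `∫∫ K dμ dμ > 0`, then the family of graph
distributions fails projectivity. -/
theorem sparse_graphon_lpm_not_projective
    {S : Type*} [MetricSpace S] [MeasurableSpace S] [BorelSpace S]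
    (μ : Measure S) [IsProbabilityMeasure μ]
    (K : ℝ≥0 → ℝ) (hKmeas : Measurable K) (hK0 : ∀ t, 0 ≤ K t)
    (hKpos : 0 < ∫ z, ∫ z', K (nndist z z') ∂μ ∂μ)
    (s : ℕ → ℝ) (hspos : ∀ n, 0 < s n)
    (hsK : ∀ (n : ℕ) (z z' : S), s n * K (nndist z z') ≤ 1)
    (P : (n : ℕ) → (Fin n → Fin n → Bool) → ℝ)
    (hP : ∀ (n : ℕ) (y : Fin n → Fin n → Bool),
      P n y = ∫ z : Fin n → S,
        ∏ i : Fin n, ∏ j ∈ Finset.Ioi i,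
          (if y i j then s n * K (nndist (z i) (z j))
           else 1 - s n * K (nndist (z i) (z j)))
        ∂(Measure.pi fun _ : Fin n => μ))
    (hnonconst : ∃ n₁ n₂ : ℕ, 2 ≤ n₁ ∧ n₁ < n₂ ∧ s n₁ ≠ s n₂) :
    ∃ (n₁ n₂ : ℕ) (hn : n₁ < n₂) (y : Fin n₁ → Fin n₁ → Bool),
      (∀ i j, y i j = y j i) ∧ (∀ i, y i i = false) ∧
      P n₁ y ≠
        ∑ x ∈ Finset.univ.filter (fun x : Fin n₂ → Fin n₂ → Bool =>
            (∀ i j, x i j = x j i) ∧ (∀ i, x i i = false) ∧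
            (∀ i j : Fin n₁, x (Fin.castLE hn.le i) (Fin.castLE hn.le j) = y i j)),
          P n₂ x :=
  sparse_graphon_lpm_not_projective_general μ K hK0 hKpos s hspos hsK P hP hnonconst
end
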